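/- arXiv:1212.5726 — 9 statements merged into one kernel-verified Lean document; each statement's English description precedes it below -/
import Mathlib

section
/- For a topological space X, the following are equivalent: (1) for every pair of pointwise discontinuous functions f : X → ℝ and g : X → ℝ, the set C(f) ∩ C(g) is dense in X; (2) for every pair G, H of dense Gδ subsets of X, the set G ∩ H is dense in X. -/
/-!
Condition (1) implies (2) because every dense Gδ set `G = ⋂ n, U n` is the continuity set of a
real function: let `f x = 2⁻¹ ^ n` for the first `n` with `x ∉ U n`, and `f = 0` on `G`.
Near a point of `G` the first exit index is large, so `f` is small; at a point outside `G`
the value is positive while `f` vanishes on the dense set `G`. Conversely, continuity sets are Gδ.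
-/

open Set Topology

section

variable {X : Type*}

theorem ContinuousAt.eq_of_dense_eqOn_const [TopologicalSpace X] {Y : Type*}
    [TopologicalSpace Y] [T1Space Y] {f : X → Y} {D : Set X} {c : Y} {x : X} (hf : ContinuousAt f x) (hD : Dense D)
    (hfD : EqOn f (fun _ ↦ c) D) : f x = c := by
  have hfD' : f '' D ⊆ {c} := by
    rintro _ ⟨y, hy, rfl⟩
    exact hfD hy
  exact closure_minimal hfD' isClosed_singleton (mem_closure_image hf (hD x))

noncomputable def firstExitWeight (U : ℕ → Set X) (x : X) : ℝ :=
  open Classical in if h : ∃ n, x ∉ U n then 2⁻¹ ^ Nat.find h else 0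

section firstExitWeight

variable {U : ℕ → Set X}

theorem firstExitWeight_eq_zero_iff {x : X} : firstExitWeight U x = 0 ↔ x ∈ ⋂ n, U n := by
  unfold firstExitWeight
  split_ifs with h <;> simpa [mem_iInter] using h

theorem firstExitWeight_nonneg (x : X) : 0 ≤ firstExitWeight U x := by
  unfold firstExitWeight
  split_ifs <;> positivity

open Classical in
theorem firstExitWeight_le_of_forall_le_mem {y : X} {n : ℕ} (hy : ∀ k ≤ n, y ∈ U k) :
    firstExitWeight U y ≤ 2⁻¹ ^ n := by
  unfold firstExitWeight
  split_ifs with h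
  · have hn : n < Nat.find h := (Nat.lt_find_iff h n).mpr fun k hk ↦ not_not.mpr (hy k hk)
    exact pow_le_pow_of_le_one (by norm_num) (by norm_num) hn.le
  · positivity

variable [TopologicalSpace X]

theorem continuousAt_firstExitWeight (hU : ∀ n, IsOpen (U n)) {x : X} (hx : x ∈ ⋂ n, U n) :
    ContinuousAt (firstExitWeight U) x := by
  rw [ContinuousAt, firstExitWeight_eq_zero_iff.mpr hx, Metric.tendsto_nhds]
  intro ε hε
  obtain ⟨n, hn⟩ := exists_pow_lt_of_lt_one hε (by norm_num : (2 : ℝ)⁻¹ < 1)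
  have hV : ⋂ k ∈ Finset.range (n + 1), U k ∈ 𝓝 x :=
    (isOpen_biInter_finset fun k _ ↦ hU k).mem_nhds (by simp_all [mem_iInter])
  filter_upwards [hV] with y hy
  simp only [mem_iInter, Finset.mem_range, Nat.lt_succ_iff] at hy
  rw [Real.dist_0_eq_abs, abs_of_nonneg (firstExitWeight_nonneg y)]
  exact (firstExitWeight_le_of_forall_le_mem hy).trans_lt hn

theorem setOf_continuousAt_firstExitWeight (hU : ∀ n, IsOpen (U n)) (hd : Dense (⋂ n, U n)) :
    {x | ContinuousAt (firstExitWeight U) x} = ⋂ n, U n := by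
  refine Subset.antisymm (fun x hx ↦ ?_) fun x ↦ continuousAt_firstExitWeight hU
  exact firstExitWeight_eq_zero_iff.mp <|
    ContinuousAt.eq_of_dense_eqOn_const hx hd fun y hy ↦ firstExitWeight_eq_zero_iff.mpr hy

theorem Dense.exists_setOf_continuousAt_eq {G : Set X} (hd : Dense G) (hG : IsGδ G) :
    ∃ f : X → ℝ, {x | ContinuousAt f x} = G := by
  obtain ⟨U, hU, rfl⟩ := hG.eq_iInter_nat
  exact ⟨_, setOf_continuousAt_firstExitWeight hU hd⟩

end firstExitWeight

end

/-- Gauld–Piotrowski characterization of Volterra spaces: for a topological space `X`,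
the pointwise-discontinuous-functions condition is equivalent to the dense-Gδ condition. -/
theorem volterra_characterization {X : Type*} [TopologicalSpace X] :
    (∀ f g : X → ℝ, Dense {x | ContinuousAt f x} → Dense {x | ContinuousAt g x} →
        Dense ({x | ContinuousAt f x} ∩ {x | ContinuousAt g x})) ↔
    (∀ G H : Set X, IsGδ G → Dense G → IsGδ H → Dense H → Dense (G ∩ H)) := by
  constructor
  · intro h G H hG hGd hH hHd
    obtain ⟨f, rfl⟩ := hGd.exists_setOf_continuousAt_eq hG
    obtain ⟨g, rfl⟩ := hHd.exists_setOf_continuousAt_eq hH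
    exact h f g hGd hHd
  · intro h f g hf hg
    exact h _ _ (IsGδ.setOfPred_continuousAt f) hf (IsGδ.setOfPred_continuousAt g) hg
end

section
/- Every almost P-space is Volterra: if X is a topological space in which every non-empty Gδ subset has non-empty interior, then for every pair G, H of dense Gδ subsets of X, the set G ∩ H is dense in X. -/
open Set

theorem IsGδ.dense_interior {X : Type*} [TopologicalSpace X]
    (hAP : ∀ s : Set X, IsGδ s → s.Nonempty → (interior s).Nonempty)
    {G : Set X} (hG : IsGδ G) (hGd : Dense G) : Dense (interior G) := by
  refine dense_iff_inter_open.mpr fun U hU hUne => ?_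
  have hUG : (U ∩ G).Nonempty := hGd.inter_open_nonempty U hU hUne
  simpa only [interior_inter, hU.interior_eq] using hAP (U ∩ G) (hU.isGδ.inter hG) hUG

/-- Every almost P-space is Volterra. -/
theorem almostPSpace_volterra {X : Type*} [TopologicalSpace X]
    (hAP : ∀ s : Set X, IsGδ s → s.Nonempty → (interior s).Nonempty) :
    ∀ G H : Set X, IsGδ G → Dense G → IsGδ H → Dense H → Dense (G ∩ H) := by
  intro G H hG hGd _ hHd
  have hint : Dense (interior G ∩ H) :=
    (hG.dense_interior hAP hGd).inter_of_isOpen_left hHd isOpen_interior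
  exact hint.mono (inter_subset_inter_left H interior_subset)
end

section
/- Every dense subspace of an almost P-space is an almost P-space: if X is a topological space in which every non-empty Gδ subset has non-empty interior, and D is a dense subset of X, then D with the subspace topology is an almost P-space. -/
/-!
A Gδ set of a subspace `D` is the trace of a Gδ set `T` of the ambient space `X`. If it is
non-empty, so is `T`, hence `T` has non-empty interior; by density this interior meets `D`, and
its trace on `D` is a non-empty open subset of the given Gδ set.
-/

open Topology Set

def IsAlmostPSpace (X : Type*) [TopologicalSpace X] : Prop :=
  ∀ s : Set X, IsGδ s → s.Nonempty → (interior s).Nonempty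

theorem Topology.IsInducing.exists_isGδ_preimage_eq {X Y : Type*} [TopologicalSpace X]
    [TopologicalSpace Y] {f : Y → X} (hf : IsInducing f) {s : Set Y} (hs : IsGδ s) :
    ∃ t : Set X, IsGδ t ∧ f ⁻¹' t = s := by
  obtain ⟨V, hVo, rfl⟩ := hs.eq_iInter_nat
  choose U hUo hUV using fun n => hf.isOpen_iff.mp (hVo n)
  exact ⟨⋂ n, U n, .iInter_of_isOpen hUo, by simp only [preimage_iInter, hUV]⟩

theorem IsAlmostPSpace.of_isInducing_of_denseRange {X Y : Type*} [TopologicalSpace X]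
    [TopologicalSpace Y] (hX : IsAlmostPSpace X) {f : Y → X} (hind : IsInducing f)
    (hdense : DenseRange f) : IsAlmostPSpace Y := by
  intro s hs ⟨y, hy⟩
  obtain ⟨t, ht, rfl⟩ := hind.exists_isGδ_preimage_eq hs
  obtain ⟨y', hy'⟩ := hdense.exists_mem_open isOpen_interior (hX t ht ⟨f y, hy⟩)
  exact ⟨y', preimage_interior_subset_interior_preimage hind.continuous hy'⟩

/-- Every dense subspace of an almost P-space is an almost P-space. -/
theorem dense_subspace_almostPSpace {X : Type*} [TopologicalSpace X]
    (hAP : ∀ s : Set X, IsGδ s → s.Nonempty → (interior s).Nonempty)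
    (D : Set X) (hD : Dense D) :
    ∀ s : Set D, IsGδ s → s.Nonempty → (interior s).Nonempty :=
  IsAlmostPSpace.of_isInducing_of_denseRange hAP IsInducing.subtypeVal hD.denseRange_val
end

section
/- Every almost P-space is dense-hereditarily Volterra and open-hereditarily Volterra: if X is a topological space in which every non-empty Gδ subset has non-empty interior, then every dense subspace of X and every open subspace of X (with the subspace topology) is Volterra. -/
/-!
In an almost P-space every Gδ set `A` lies in the closure of its interior, since `V ∩ A` has
non-empty interior for each open `V` meeting `A`. Hence a dense Gδ set has dense open interior,
and a dense open set meets every dense set densely: almost P-spaces are Volterra. Being an almost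
P-space passes to dense and to open subspaces, because a Gδ set of the subspace is the trace of a
Gδ set of `X`.
-/

open Set Topology

def AlmostPSpace (X : Type*) [TopologicalSpace X] : Prop :=
  ∀ s : Set X, IsGδ s → s.Nonempty → (interior s).Nonempty

def VolterraSpace (X : Type*) [TopologicalSpace X] : Prop :=
  ∀ G H : Set X, IsGδ G → Dense G → IsGδ H → Dense H → Dense (G ∩ H)

section

variable {X Y : Type*} [TopologicalSpace X] [TopologicalSpace Y]

theorem Topology.IsInducing.isGδ_iff {f : X → Y} (hf : IsInducing f) {s : Set X} :
    IsGδ s ↔ ∃ t : Set Y, IsGδ t ∧ f ⁻¹' t = s := by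
  refine ⟨fun hs => ?_, fun ⟨t, ht, hts⟩ => hts ▸ ht.preimage hf.continuous⟩
  obtain ⟨u, hu, rfl⟩ := hs.eq_iInter_nat
  choose v hv hvu using fun n => hf.isOpen_iff.1 (hu n)
  exact ⟨⋂ n, v n, .iInter_of_isOpen hv, by simp only [preimage_iInter, hvu]⟩

theorem Dense.inter_of_subset_closure_interior {G H : Set X} (hG : Dense G)
    (hGi : G ⊆ closure (interior G)) (hH : Dense H) : Dense (G ∩ H) := by
  exact ((dense_closure.1 (hG.mono hGi)).inter_of_isOpen_left hH isOpen_interior).mono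
    (inter_subset_inter_left H interior_subset)

namespace AlmostPSpace

theorem subset_closure_interior (hX : AlmostPSpace X) {A : Set X} (hA : IsGδ A) :
    A ⊆ closure (interior A) := by
  intro x hx
  rw [mem_closure_iff]
  intro V hV hxV
  simpa only [interior_inter, hV.interior_eq] using
    hX (V ∩ A) (hV.isGδ.inter hA) ⟨x, hxV, hx⟩

theorem volterraSpace (hX : AlmostPSpace X) : VolterraSpace X :=
  fun _ _ hG hGd _ hHd => hGd.inter_of_subset_closure_interior (hX.subset_closure_interior hG) hHd

theorem subtype_of_dense (hX : AlmostPSpace X) {D : Set X} (hD : Dense D) :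
    AlmostPSpace D := by
  rintro G hG ⟨x, hx⟩
  obtain ⟨A, hA, rfl⟩ := IsInducing.subtypeVal.isGδ_iff.1 hG
  have hAi : (interior A).Nonempty := hX A hA ⟨x, hx⟩
  obtain ⟨y, hyA, hyD⟩ := hD.inter_open_nonempty _ isOpen_interior hAi
  exact ⟨⟨y, hyD⟩, preimage_interior_subset_interior_preimage continuous_subtype_val hyA⟩

theorem subtype_of_isOpen (hX : AlmostPSpace X) {U : Set X} (hU : IsOpen U) :
    AlmostPSpace U := by
  rintro G hG ⟨x, hx⟩
  obtain ⟨A, hA, rfl⟩ := IsInducing.subtypeVal.isGδ_iff.1 hG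
  obtain ⟨y, hy⟩ := hX (U ∩ A) (hU.isGδ.inter hA) ⟨x, x.2, hx⟩
  rw [interior_inter, hU.interior_eq] at hy
  exact ⟨⟨y, hy.1⟩, preimage_interior_subset_interior_preimage continuous_subtype_val hy.2⟩

end AlmostPSpace

end

/-- Every almost P-space is dense-hereditarily Volterra and open-hereditarily Volterra. -/
theorem almostPSpace_dense_open_hereditarily_volterra {X : Type*} [TopologicalSpace X]
    (hAP : ∀ s : Set X, IsGδ s → s.Nonempty → (interior s).Nonempty) :
    (∀ D : Set X, Dense D →
      ∀ G H : Set D, IsGδ G → Dense G → IsGδ H → Dense H → Dense (G ∩ H)) ∧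
    (∀ U : Set X, IsOpen U →
      ∀ G H : Set U, IsGδ G → Dense G → IsGδ H → Dense H → Dense (G ∩ H)) :=
  have hX : AlmostPSpace X := hAP
  ⟨fun _ hD => (hX.subtype_of_dense hD).volterraSpace,
    fun _ hU => (hX.subtype_of_isOpen hU).volterraSpace⟩
end

section
/- Suppose 𝒰 is a point-finite collection of open subsets of a topological space X (i.e., every point of X belongs to only finitely many members of 𝒰), and for each U ∈ 𝒰 a Gδ set G(U) ⊆ U is given. Then the union ⋃{G(U) : U ∈ 𝒰} is a Gδ set in X. -/
/-!
Write each `G U` as `⋂ n, B U n` with `B U n` open, decreasing in `n` and contained in `U`.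
Then `⋃ U ∈ 𝒰, G U = ⋂ n, ⋃ U ∈ 𝒰, B U n`: if `x` lies in the right-hand side but in no `G U`,
then each of the finitely many `U ∋ x` has some `B U n_U ∌ x`, and at a level `n` beyond all
the `n_U` no `B U n` contains `x` at all.
-/

open Set Filter

theorem IsGδ.exists_antitone_isOpen_subset {X : Type*} [TopologicalSpace X] {G U : Set X}
    (hG : IsGδ G) (hU : IsOpen U) (hGU : G ⊆ U) :
    ∃ B : ℕ → Set X, Antitone B ∧ (∀ n, IsOpen (B n)) ∧ B 0 ⊆ U ∧ ⋂ n, B n = G := by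
  obtain ⟨f, hf_open, rfl⟩ := isGδ_iff_eq_iInter_nat.1 hG
  refine ⟨fun n ↦ U ∩ ⋂ k ≤ n, f k, fun m n hmn ↦ ?_, fun n ↦ ?_, inter_subset_left, ?_⟩
  · exact inter_subset_inter_right U (biInter_subset_biInter_left fun k hk ↦ le_trans hk hmn)
  · exact hU.inter ((finite_Iic n).isOpen_biInter fun k _ ↦ hf_open k)
  · rw [← inter_iInter, biInter_le_eq_iInter, inter_eq_right.2 hGU]

theorem iInter_biUnion_eq_biUnion_iInter_of_antitone {ι α : Type*} {s : Set ι}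
    {B : ι → ℕ → Set α} (hB : ∀ i ∈ s, Antitone (B i))
    (hfin : ∀ x, {i ∈ s | x ∈ B i 0}.Finite) :
    ⋂ n, ⋃ i ∈ s, B i n = ⋃ i ∈ s, ⋂ n, B i n := by
  refine Subset.antisymm (fun x hx ↦ ?_) (iUnion₂_subset fun i hi ↦ subset_iInter fun n ↦
    (iInter_subset _ n).trans (subset_biUnion_of_mem (u := fun i ↦ B i n) hi))
  by_contra hx_not
  have hleave : ∀ i ∈ {i ∈ s | x ∈ B i 0}, ∀ᶠ n in atTop, x ∉ B i n := by
    rintro i ⟨hi, -⟩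
    obtain ⟨N, hN⟩ := not_forall.1 fun h ↦ hx_not (mem_biUnion hi (mem_iInter.2 h))
    exact eventually_atTop.2 ⟨N, fun n hn hxn ↦ hN (hB i hi hn hxn)⟩
  obtain ⟨n, hn⟩ := ((eventually_all_finite (hfin x)).2 hleave).exists
  obtain ⟨i, hi, hxi⟩ := mem_iUnion₂.1 (mem_iInter.1 hx n)
  exact hn i ⟨hi, hB i hi (Nat.zero_le n) hxi⟩ hxi

/-- Gruenhage–Lutzer lemma: if `𝒰` is a point-finite collection of open subsets of `X`
and each `U ∈ 𝒰` contains a Gδ set `G U`, then `⋃ U ∈ 𝒰, G U` is a Gδ set. -/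
theorem pointFinite_union_gdelta {X : Type*} [TopologicalSpace X]
    (𝒰 : Set (Set X)) (hopen : ∀ U ∈ 𝒰, IsOpen U)
    (hpf : ∀ x : X, {U ∈ 𝒰 | x ∈ U}.Finite)
    (G : Set X → Set X) (hGδ : ∀ U ∈ 𝒰, IsGδ (G U)) (hsub : ∀ U ∈ 𝒰, G U ⊆ U) :
    IsGδ (⋃ U ∈ 𝒰, G U) := by
  choose! B hB_anti hB_open hB_sub hB_inter using
    fun U hU ↦ (hGδ U hU).exists_antitone_isOpen_subset (hopen U hU) (hsub U hU)
  have hfin : ∀ x, {U ∈ 𝒰 | x ∈ B U 0}.Finite := fun x ↦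
    (hpf x).subset fun U ⟨hU, hx⟩ ↦ ⟨hU, hB_sub U hU hx⟩
  rw [iUnion₂_congr fun U hU ↦ (hB_inter U hU).symm,
    ← iInter_biUnion_eq_biUnion_iInter_of_antitone hB_anti hfin]
  exact .iInter_of_isOpen fun n ↦ isOpen_biUnion fun U hU ↦ hB_open U hU n
end

section
/- If X is a T1 P-space and Y is a weak P-space, then the product X × Y is a weak P-space, i.e., every countable subset of X × Y is closed. -/
/-!
A point `(a, b)` outside a countable `s ⊆ X × Y` is separated from `s` by the open box
`(π₁ s \ {a})ᶜ ×ˢ {y | (a, y) ∈ s}ᶜ`: both removed sets are countable, hence closed, and a point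
of `s` in the box would have first coordinate `a`. So it suffices that countable subsets of both
factors are closed, which holds in a T1 P-space because the complement of a countable set is a
countable intersection of cofinite open sets.
-/

open Set

theorem Set.Countable.isClosed_of_isGδ_imp_isOpen {X : Type*} [TopologicalSpace X] [T1Space X]
    (hP : ∀ s : Set X, IsGδ s → IsOpen s) {t : Set X} (ht : t.Countable) : IsClosed t :=
  isOpen_compl_iff.mp (hP _ ht.isGδ_compl)

theorem Set.Countable.isClosed_prod {X Y : Type*} [TopologicalSpace X] [TopologicalSpace Y]
    (hX : ∀ s : Set X, s.Countable → IsClosed s) (hY : ∀ s : Set Y, s.Countable → IsClosed s)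
    {s : Set (X × Y)} (hs : s.Countable) : IsClosed s := by
  refine isOpen_compl_iff.mp (isOpen_iff_forall_mem_open.mpr ?_)
  rintro ⟨a, b⟩ hab
  set A : Set X := Prod.fst '' s \ {a}
  set B : Set Y := {y | (a, y) ∈ s}
  have hA : A.Countable := (hs.image _).mono sdiff_subset
  have hB : B.Countable := (hs.image Prod.snd).mono fun _ hy => mem_image_of_mem Prod.snd hy
  refine ⟨Aᶜ ×ˢ Bᶜ, ?_, (hX A hA).isOpen_compl.prod (hY B hB).isOpen_compl, fun h => h.2 rfl, hab⟩
  rintro ⟨x, y⟩ ⟨hxA, hyB⟩ hxy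
  obtain rfl : x = a := by_contra fun hxa => hxA ⟨⟨(x, y), hxy, rfl⟩, hxa⟩
  exact hyB hxy

/-- If `X` is a T1 P-space and `Y` is a weak P-space, then `X × Y` is a weak P-space. -/
theorem prod_pSpace_weakPSpace {X Y : Type*} [TopologicalSpace X] [T1Space X]
    [TopologicalSpace Y]
    (hP : ∀ s : Set X, IsGδ s → IsOpen s)
    (hY : ∀ s : Set Y, s.Countable → IsClosed s) :
    ∀ s : Set (X × Y), s.Countable → IsClosed s :=
  fun _ hs => hs.isClosed_prod (fun _ ht => ht.isClosed_of_isGδ_imp_isOpen hP) hY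
end

section
/- Let X = {f ∈ 2^{ω₁} : |f⁻¹(1)| ≤ ℵ₀} be the set of all functions from ω₁ to {0,1} with countable support. For every partial function σ from a countable subset of ω₁ to {0,1}, let [σ] = {f ∈ X : σ ⊆ f}, and for every n < ω let Xₙ = {f ∈ X : |f⁻¹(1)| = n}. Equip X with the topology generated by the subbase {[σ] \ Xₙ : σ a countable partial function, n < ω}. Then X is a weak P-space: every countable subset of X is closed. -/
open Set TopologicalSpace

/-- The underlying set: functions from `I` to `Bool` with countable support. -/
def SpadaroX (I : Type*) : Type _ := {f : I → Bool // {i | f i = true}.Countable}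

/-- `[σ]`: the set of members of `X` extending the partial function `σ`
(a partial function is coded as a map `I → Option Bool`). -/
def cylX {I : Type*} (σ : I → Option Bool) : Set (SpadaroX I) :=
  {f | ∀ i b, σ i = some b → f.1 i = b}

/-- `Xₙ`: the set of members of `X` whose support has exactly `n` elements. -/
def XnX {I : Type*} (n : ℕ) : Set (SpadaroX I) :=
  {f | {i | f.1 i = true}.encard = (n : ℕ∞)}

/-- The subbase `{[σ] \ Xₙ : σ a countable partial function, n < ω}`. -/
def spadaroSubbase (I : Type*) : Set (Set (SpadaroX I)) :=
  {s | ∃ (σ : I → Option Bool) (n : ℕ),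
    {i | σ i ≠ none}.Countable ∧ s = cylX σ \ XnX n}

instance spadaroTop (I : Type*) : TopologicalSpace (SpadaroX I) :=
  generateFrom (spadaroSubbase I)

/-!
Given a countable `s` and `f ∉ s`, let `D` be the union of the supports of `f` and of the members
of `s`; it is countable. Any `g ∈ s` agreeing with `f` on `D` equals `f`, since both vanish off `D`.
So `[f ↾ D] \ Xₙ`, with `n` chosen so that `f ∉ Xₙ`, is an open neighbourhood of `f` missing `s`.
-/

theorem ENat.exists_ne_natCast (e : ℕ∞) : ∃ n : ℕ, e ≠ n := by
  induction e using ENat.recTopCoe with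
  | top => exact ⟨0, ENat.top_ne_natCast 0⟩
  | coe m => exact ⟨m + 1, Nat.cast_injective.ne (by omega)⟩

namespace SpadaroX

variable {I : Type*}

open Classical in
noncomputable def restrictTo (f : I → Bool) (D : Set I) : I → Option Bool :=
  fun i => if i ∈ D then some (f i) else none

theorem restrictTo_ne_none_iff {f : I → Bool} {D : Set I} {i : I} :
    restrictTo f D i ≠ none ↔ i ∈ D := by
  by_cases hi : i ∈ D <;> simp [restrictTo, hi]

theorem mem_cylX_restrictTo {f : I → Bool} {D : Set I} {g : SpadaroX I} :
    g ∈ cylX (restrictTo f D) ↔ EqOn g.1 f D := by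
  refine ⟨fun hg i hi => hg i _ (by simp [restrictTo, hi]), fun hg i b hib => ?_⟩
  by_cases hi : i ∈ D
  · simp only [restrictTo, hi, if_true, Option.some.injEq] at hib
    exact hib ▸ hg hi
  · simp [restrictTo, hi] at hib

theorem isOpen_cylX_diff_XnX {σ : I → Option Bool} (hσ : {i | σ i ≠ none}.Countable) (n : ℕ) :
    IsOpen (cylX σ \ XnX n) :=
  isOpen_generateFrom_of_mem ⟨σ, n, hσ, rfl⟩

theorem eq_of_eqOn {f g : SpadaroX I} {D : Set I} (hf : {i | f.1 i = true} ⊆ D)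
    (hg : {i | g.1 i = true} ⊆ D) (h : EqOn f.1 g.1 D) : f = g := by
  refine Subtype.ext (funext fun i => ?_)
  by_cases hi : i ∈ D
  · exact h hi
  · have hfi : f.1 i = false := by simpa using mt (@hf i) hi
    have hgi : g.1 i = false := by simpa using mt (@hg i) hi
    rw [hfi, hgi]

end SpadaroX

theorem spadaro_weakPSpace_general (I : Type*) :
    ∀ s : Set (SpadaroX I), s.Countable → IsClosed s := by
  intro s hs
  rw [← isOpen_compl_iff, isOpen_iff_forall_mem_open]
  intro f hf
  set D : Set I := {i | f.1 i = true} ∪ ⋃ g ∈ s, {i | g.1 i = true}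
  have hD : D.Countable := f.2.union (hs.biUnion fun g _ => g.2)
  obtain ⟨n, hn⟩ := ENat.exists_ne_natCast {i | f.1 i = true}.encard
  refine ⟨cylX (SpadaroX.restrictTo f.1 D) \ XnX n, ?_,
    SpadaroX.isOpen_cylX_diff_XnX (by simpa only [SpadaroX.restrictTo_ne_none_iff]) n,
    SpadaroX.mem_cylX_restrictTo.2 fun _ _ => rfl, hn⟩
  rintro g ⟨hg, -⟩ hgs
  have hgf : g = f := SpadaroX.eq_of_eqOn (fun _ hi => Or.inr (mem_biUnion hgs hi))
    subset_union_left (SpadaroX.mem_cylX_restrictTo.1 hg)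
  exact hf (hgf ▸ hgs)

theorem spadaro_weakPSpace (I : Type*) (hI : Cardinal.mk I = Cardinal.aleph 1) :
    ∀ s : Set (SpadaroX I), s.Countable → IsClosed s :=
  spadaro_weakPSpace_general I
end

section
/- Let X = {f ∈ 2^{ω₁} : |f⁻¹(1)| ≤ ℵ₀} be the set of all functions from ω₁ to {0,1} with countable support. For every partial function σ from a countable subset of ω₁ to {0,1}, let [σ] = {f ∈ X : σ ⊆ f}, and for every n < ω let Xₙ = {f ∈ X : |f⁻¹(1)| = n}. Equip X with the topology generated by the subbase {[σ] \ Xₙ : σ a countable partial function, n < ω}. Then X is a Baire space: every countable intersection of dense open subsets of X is dense. -/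
open Set TopologicalSpace

/-!
An open set `U` containing `g` contains every point of infinite support that agrees with `g` on
some countable set of coordinates, because points of infinite support lie in no `Xₙ`. Given dense
open sets `s k` and a point of an open `U`, a recursion therefore produces points `g k` and
increasing countable sets `A k`, each `g (k + 1)` agreeing with `g k` on `A k`, such that every
point of infinite support agreeing with `g (k + 1)` on `A (k + 1)` lies in `s k`. Since `I` is
uncountable, `⋃ k, A k` misses infinitely many coordinates; gluing the `g k` and adding a
countably infinite support outside `⋃ k, A k` gives a point of `U ∩ ⋂ k, s k`.
-/

section Glue

variable {ι β : Type*} {g : ℕ → ι → β} {A : ℕ → Set ι}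

lemma eqOn_of_le_of_eqOn_succ (hA : Monotone A) (hg : ∀ k, EqOn (g (k + 1)) (g k) (A k))
    {j k : ℕ} (hjk : j ≤ k) : EqOn (g k) (g j) (A j) := by
  induction k, hjk using Nat.le_induction with
  | base => exact eqOn_refl _ _
  | succ m hjm ih => exact fun i hi => (hg m (hA hjm hi)).trans (ih hi)

lemma eq_of_mem_of_eqOn_succ (hA : Monotone A) (hg : ∀ k, EqOn (g (k + 1)) (g k) (A k))
    {i : ι} {j k : ℕ} (hj : i ∈ A j) (hk : i ∈ A k) : g j i = g k i := by
  rcases le_total j k with hjk | hkj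
  · exact (eqOn_of_le_of_eqOn_succ hA hg hjk hj).symm
  · exact eqOn_of_le_of_eqOn_succ hA hg hkj hk

open Classical in
noncomputable def glue (g : ℕ → ι → β) (A : ℕ → Set ι) (h : ι → β) : ι → β :=
  fun i => if hi : ∃ k, i ∈ A k then g hi.choose i else h i

lemma eqOn_glue (hA : Monotone A) (hg : ∀ k, EqOn (g (k + 1)) (g k) (A k)) (h : ι → β)
    (k : ℕ) : EqOn (glue g A h) (g k) (A k) := by
  intro i hi
  have hex : ∃ k, i ∈ A k := ⟨k, hi⟩
  rw [glue, dif_pos hex]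
  exact eq_of_mem_of_eqOn_succ hA hg hex.choose_spec hi

lemma eqOn_glue_compl (h : ι → β) : EqOn (glue g A h) h (⋃ k, A k)ᶜ := by
  intro i hi
  rw [glue, dif_neg (by simpa using hi)]

lemma glue_preimage_subset (h : ι → β) (t : Set β) :
    glue g A h ⁻¹' t ⊆ (⋃ k, g k ⁻¹' t) ∪ h ⁻¹' t := by
  intro i hi
  by_cases hex : ∃ k, i ∈ A k
  · rw [mem_preimage, glue, dif_pos hex] at hi
    exact Or.inl (mem_iUnion.mpr ⟨_, hi⟩)
  · rw [mem_preimage, glue, dif_neg hex] at hi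
    exact Or.inr hi

end Glue

namespace SpadaroX

variable {I : Type*}

lemma disjoint_XnX {m n : ℕ} (h : m ≠ n) : Disjoint (XnX m : Set (SpadaroX I)) (XnX n) :=
  disjoint_left.mpr fun _ hm hn => h (by exact_mod_cast hm.symm.trans hn)

lemma isOpen_cylX {σ : I → Option Bool} (hσ : {i | σ i ≠ none}.Countable) :
    IsOpen (cylX σ) := by
  have hbasic : ∀ n, IsOpen (cylX σ \ XnX n) := fun n =>
    GenerateOpen.basic _ ⟨σ, n, hσ, rfl⟩
  rw [← sdiff_empty (s := cylX σ), ← (disjoint_XnX zero_ne_one).inter_eq, sdiff_inter]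
  exact (hbasic 0).union (hbasic 1)

lemma isOpen_setOf_eqOn (g : SpadaroX I) {A : Set I} (hA : A.Countable) :
    IsOpen {f : SpadaroX I | EqOn f.1 g.1 A} := by
  classical
  let σ : I → Option Bool := fun i => if i ∈ A then some (g.1 i) else none
  have hσ : {i | σ i ≠ none} = A := by ext i; by_cases hi : i ∈ A <;> simp [σ, hi]
  convert isOpen_cylX (hσ ▸ hA) using 1
  ext f
  refine ⟨fun hf i b hi => ?_, fun hf i hi => hf i (g.1 i) (by simp [σ, hi])⟩
  by_cases hiA : i ∈ A
  · simp only [σ, hiA, if_true, Option.some.injEq] at hi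
    exact hi ▸ hf hiA
  · simp [σ, hiA] at hi

lemma exists_countable_forall_eqOn_mem {U : Set (SpadaroX I)} (hU : IsOpen U)
    {g : SpadaroX I} (hg : g ∈ U) :
    ∃ A : Set I, A.Countable ∧
      ∀ f : SpadaroX I, EqOn f.1 g.1 A → {i | f.1 i = true}.Infinite → f ∈ U := by
  induction hU generalizing g with
  | basic s hs =>
    obtain ⟨σ, n, hσ, rfl⟩ := hs
    refine ⟨_, hσ, fun f hfg hf => ⟨fun i b hi => ?_, ?_⟩⟩
    · rw [hfg (by simp [hi])]
      exact hg.1 i b hi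
    · simp [XnX, hf.encard_eq]
  | univ => exact ⟨∅, countable_empty, fun _ _ _ => trivial⟩
  | inter U V _ _ ihU ihV =>
    obtain ⟨A, hA, hAU⟩ := ihU hg.1
    obtain ⟨B, hB, hBV⟩ := ihV hg.2
    exact ⟨A ∪ B, hA.union hB, fun f hfg hf =>
      ⟨hAU f (hfg.mono subset_union_left) hf, hBV f (hfg.mono subset_union_right) hf⟩⟩
  | sUnion S _ ih =>
    obtain ⟨U, hUS, hgU⟩ := hg
    obtain ⟨A, hA, hAU⟩ := ih U hUS hgU
    exact ⟨A, hA, fun f hfg hf => ⟨U, hUS, hAU f hfg hf⟩⟩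

lemma exists_eqOn_forall_eqOn_mem_of_dense {s : Set (SpadaroX I)} (hso : IsOpen s)
    (hsd : Dense s) (g : SpadaroX I) {A : Set I} (hA : A.Countable) :
    ∃ g' : SpadaroX I, ∃ B : Set I, B.Countable ∧ A ⊆ B ∧ EqOn g'.1 g.1 A ∧
      ∀ f : SpadaroX I, EqOn f.1 g'.1 B → {i | f.1 i = true}.Infinite → f ∈ s := by
  obtain ⟨g', hg'g, hg's⟩ :=
    hsd.inter_open_nonempty _ (isOpen_setOf_eqOn g hA) ⟨g, fun _ _ => rfl⟩
  obtain ⟨B, hB, hBs⟩ := exists_countable_forall_eqOn_mem hso hg's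
  refine ⟨g', A ∪ B, hA.union hB, subset_union_left, hg'g, fun f hfg hf => ?_⟩
  exact hBs f (hfg.mono subset_union_right) hf

lemma exists_infinite_forall_eqOn [Uncountable I] (g : ℕ → SpadaroX I) {A : ℕ → Set I}
    (hA : ∀ k, (A k).Countable) (hmono : Monotone A)
    (hg : ∀ k, EqOn (g (k + 1)).1 (g k).1 (A k)) :
    ∃ f : SpadaroX I, {i | f.1 i = true}.Infinite ∧ ∀ k, EqOn f.1 (g k).1 (A k) := by
  classical
  have hD : (⋃ k, A k).Countable := countable_iUnion hA
  have hDc : (⋃ k, A k)ᶜ.Infinite := fun h =>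
    not_countable_univ (union_compl_self (⋃ k, A k) ▸ hD.union h.countable)
  obtain ⟨C, hCD, hC, hCinf⟩ := hDc.exists_subset_countable_infinite
  let F := glue (fun k => (g k).1) A (fun i => decide (i ∈ C))
  have hFC : C ⊆ {i | F i = true} := fun i hi => by
    have hFi : F i = decide (i ∈ C) := eqOn_glue_compl _ (hCD hi)
    simpa [hi] using hFi
  have hF : {i | F i = true}.Countable := by
    refine ((countable_iUnion fun k => (g k).2).union (hC.mono ?_)).mono
      (glue_preimage_subset _ {true})
    intro i hi
    simpa using hi
  exact ⟨⟨F, hF⟩, hCinf.mono hFC, eqOn_glue (g := fun k => (g k).1) hmono hg _⟩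

instance baireSpace [Uncountable I] : BaireSpace (SpadaroX I) := by
  refine ⟨fun s hso hsd => dense_iff_inter_open.mpr fun U hU ⟨g₀, hg₀⟩ => ?_⟩
  obtain ⟨A₀, hA₀, hA₀U⟩ := exists_countable_forall_eqOn_mem hU hg₀
  choose g B hB hAB hBg hBs using fun k (p : SpadaroX I × {A : Set I // A.Countable}) =>
    exists_eqOn_forall_eqOn_mem_of_dense (hso k) (hsd k) p.1 p.2.2
  let p : ℕ → SpadaroX I × {A : Set I // A.Countable} :=
    fun k => Nat.rec (g₀, ⟨A₀, hA₀⟩) (fun k q => (g k q, ⟨B k q, hB k q⟩)) k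
  obtain ⟨f, hf, hfp⟩ := exists_infinite_forall_eqOn (fun k => (p k).1) (fun k => (p k).2.2)
    (monotone_nat_of_le_succ fun k => hAB k (p k)) (fun k => hBg k (p k))
  exact ⟨f, hA₀U f (hfp 0) hf, mem_iInter.mpr fun k => hBs k (p k) f (hfp (k + 1)) hf⟩

end SpadaroX

/-- The space `X` is Baire: every countable intersection of dense open sets is dense. -/
theorem spadaro_baire (I : Type*) (hI : Cardinal.mk I = Cardinal.aleph 1) :
    ∀ s : ℕ → Set (SpadaroX I), (∀ n, IsOpen (s n)) → (∀ n, Dense (s n)) →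
      Dense (⋂ n, s n) := by
  have : Uncountable I := Cardinal.aleph0_lt_mk_iff.mp (hI ▸ Cardinal.aleph0_lt_aleph_one)
  exact fun _ => dense_iInter_of_isOpen_nat
end

section
/- Let X = {f ∈ 2^{ω₁} : |f⁻¹(1)| ≤ ℵ₀} be the set of all functions from ω₁ to {0,1} with countable support. For every partial function σ from a countable subset of ω₁ to {0,1}, let [σ] = {f ∈ X : σ ⊆ f}, and for every n < ω let Xₙ = {f ∈ X : |f⁻¹(1)| = n}. Equip X with the topology generated by the subbase {[σ] \ Xₙ : σ a countable partial function, n < ω}. Then X is not regular: the set X₁ is closed in X, the constant zero function 0 does not belong to X₁, and there do not exist disjoint open sets U, V in X with 0 ∈ U and X₁ ⊆ V. -/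
open Set TopologicalSpace

/-- The constant zero function as an element of `X`. -/
def spadaroZero (I : Type*) : SpadaroX I :=
  ⟨fun _ => false, by simp⟩

/-!
Every open set around a point `g` contains all points that agree with `g` on some countable
set of coordinates and whose support is larger than some finite bound, since each subbasic set
`[σ] \ Xₙ` constrains countably many coordinates and excludes a single support size. Take such
data `(D₀, b₀)` for a neighbourhood `U` of `0`, choose `α ∉ D₀`, and take `(D₁, b₁)` for a
neighbourhood `V ⊇ X₁` at the indicator of `{α}`. The indicator of `{α}` together with
`b₀ + b₁` further coordinates outside `D₀ ∪ D₁` then lies in both `U` and `V`.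
-/

lemma Set.Countable.infinite_compl {α : Type*} [Uncountable α] {C : Set α} (hC : C.Countable) :
    Cᶜ.Infinite := fun hfin =>
  not_countable (Set.countable_univ_iff.mp (union_compl_self C ▸ hC.union hfin.countable))

lemma Set.Countable.exists_finset_card_eq_disjoint {α : Type*} [Uncountable α] {C : Set α}
    (hC : C.Countable) (n : ℕ) : ∃ T : Finset α, T.card = n ∧ Disjoint (T : Set α) C := by
  obtain ⟨T, hTC, hcard⟩ := hC.infinite_compl.exists_subset_card_eq n
  exact ⟨T, hcard, subset_compl_iff_disjoint_right.mp hTC⟩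

namespace SpadaroX

variable {I : Type*}

def support (f : SpadaroX I) : Set I := {i | f.1 i = true}

lemma mem_XnX_iff {f : SpadaroX I} {n : ℕ} : f ∈ XnX n ↔ f.support.encard = n := Iff.rfl

def indicator [DecidableEq I] (s : Finset I) : SpadaroX I :=
  ⟨fun i => decide (i ∈ s), s.countable_toSet.mono fun i hi => by simpa using hi⟩

lemma indicator_apply [DecidableEq I] (s : Finset I) (i : I) :
    (indicator s).1 i = decide (i ∈ s) := rfl

lemma support_indicator [DecidableEq I] (s : Finset I) : (indicator s).support = s := by
  ext i
  simp [support, indicator_apply]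

lemma exists_countable_bound_of_isOpen {W : Set (SpadaroX I)} (hW : IsOpen W)
    {g : SpadaroX I} (hg : g ∈ W) :
    ∃ D : Set I, D.Countable ∧ ∃ b : ℕ, ∀ f : SpadaroX I,
      (∀ i ∈ D, f.1 i = g.1 i) → (b : ℕ∞) < f.support.encard → f ∈ W := by
  induction hW generalizing g with
  | basic s hs =>
    obtain ⟨σ, n, hσ, rfl⟩ := hs
    refine ⟨{i | σ i ≠ none}, hσ, n, fun f hfg hsize => ⟨fun i b hib => ?_, hsize.ne'⟩⟩
    rw [hfg i (by simp [hib]), hg.1 i b hib]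
  | univ => exact ⟨∅, countable_empty, 0, fun _ _ _ => trivial⟩
  | inter s t _ _ ihs iht =>
    obtain ⟨Ds, hDs, bs, hs⟩ := ihs hg.1
    obtain ⟨Dt, hDt, bt, ht⟩ := iht hg.2
    refine ⟨Ds ∪ Dt, hDs.union hDt, max bs bt, fun f hfg hsize => ⟨?_, ?_⟩⟩
    · exact hs f (fun i hi => hfg i (.inl hi)) (lt_of_le_of_lt (by simp) hsize)
    · exact ht f (fun i hi => hfg i (.inr hi)) (lt_of_le_of_lt (by simp) hsize)
  | sUnion S _ ih =>
    obtain ⟨s, hsS, hgs⟩ := hg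
    obtain ⟨D, hD, b, h⟩ := ih s hsS hgs
    exact ⟨D, hD, b, fun f hfg hsize => ⟨s, hsS, h f hfg hsize⟩⟩

lemma isClosed_XnX (n : ℕ) : IsClosed (XnX n : Set (SpadaroX I)) := by
  rw [← isOpen_compl_iff]
  refine isOpen_generateFrom_of_mem ⟨fun _ => none, n, by simp, ?_⟩
  ext f
  simp [cylX]

lemma spadaroZero_notMem_XnX_succ (n : ℕ) : spadaroZero I ∉ XnX (n + 1) := by
  rw [mem_XnX_iff]
  simpa [support, spadaroZero] using (Nat.cast_add_one_ne_zero n).symm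

theorem not_separated_spadaroZero_XnX_one [Uncountable I] :
    ¬ ∃ U V : Set (SpadaroX I),
        IsOpen U ∧ IsOpen V ∧ spadaroZero I ∈ U ∧ XnX 1 ⊆ V ∧ Disjoint U V := by
  classical
  rintro ⟨U, V, hU, hV, h0U, hX1V, hUV⟩
  obtain ⟨D₀, hD₀, b₀, hU'⟩ := exists_countable_bound_of_isOpen hU h0U
  obtain ⟨α, hαD₀⟩ := hD₀.infinite_compl.nonempty
  have hαV : indicator {α} ∈ V := hX1V (by simp [mem_XnX_iff, support_indicator])
  obtain ⟨D₁, hD₁, b₁, hV'⟩ := exists_countable_bound_of_isOpen hV hαV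
  obtain ⟨T, hTcard, hTD⟩ :=
    ((hD₀.union hD₁).insert α).exists_finset_card_eq_disjoint (b₀ + b₁)
  have hTα : α ∉ T := fun h => hTD.ne_of_mem h (mem_insert α _) rfl
  have hTD' : ∀ i ∈ D₀ ∪ D₁, i ∉ T := fun i hi hiT =>
    hTD.ne_of_mem hiT (mem_insert_of_mem α hi) rfl
  have hsize : ∀ b ≤ b₀ + b₁, (b : ℕ∞) < (indicator (insert α T)).support.encard := by
    intro b hb
    rw [support_indicator, encard_coe_eq_coe_finsetCard, Finset.card_insert_of_notMem hTα,
      hTcard]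
    exact_mod_cast Nat.lt_succ_of_le hb
  have hfU : indicator (insert α T) ∈ U := by
    refine hU' _ (fun i hi => ?_) (hsize b₀ (by omega))
    have hiα : i ≠ α := fun h => hαD₀ (h ▸ hi)
    simp [indicator_apply, spadaroZero, hiα, hTD' i (.inl hi)]
  have hfV : indicator (insert α T) ∈ V := by
    refine hV' _ (fun i hi => ?_) (hsize b₁ (by omega))
    simp [indicator_apply, hTD' i (.inr hi)]
  exact disjoint_left.mp hUV hfU hfV

end SpadaroX

/-- The space `X` is not regular: `X₁` is closed, the zero function is not in `X₁`,
yet they cannot be separated by disjoint open sets. -/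
theorem spadaro_not_regular (I : Type*) (hI : Cardinal.mk I = Cardinal.aleph 1) :
    IsClosed (XnX 1 : Set (SpadaroX I)) ∧
    spadaroZero I ∉ (XnX 1 : Set (SpadaroX I)) ∧
    ¬ ∃ U V : Set (SpadaroX I),
        IsOpen U ∧ IsOpen V ∧ spadaroZero I ∈ U ∧ XnX 1 ⊆ V ∧ Disjoint U V := by
  have : Uncountable I := Cardinal.aleph0_lt_mk_iff.mp (hI ▸ Cardinal.aleph0_lt_aleph_one)
  exact ⟨SpadaroX.isClosed_XnX 1, SpadaroX.spadaroZero_notMem_XnX_succ 0,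
    SpadaroX.not_separated_spadaroZero_XnX_one⟩
end
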